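/- For every n ≥ 1 and every j < 2^n, every minimal puncturing bit pattern for j has cardinality 2^{d_H(j)}: if Q ∈ ψ_j then |Q| = 2^{d_H(j)}, where d_H(j) is the number of ones in the binary representation of j. -/

import Mathlib

/-!
Tracing `j ∈ Up n Q` back through the stages selects, at stage `t`, both inputs of a node whose
bit `t` is one and a single zero input of a node whose bit `t` is zero. Every position reached
agrees with `j` from bit `t` on, so the traced set doubles exactly at the one-bits of `j` and ends
with `2 ^ d_H(j)` elements. It lies in `Q` and already makes `j` incapable, so by minimality it
is `Q`.
-/

/-- Binary domination: every binary digit of `i` is at most the corresponding digit of `j`. -/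
def bdom (i j : ℕ) : Prop := ∀ t, i.testBit t = true → j.testBit t = true

instance (i j : ℕ) : Decidable (bdom i j) :=
  decidable_of_iff (i ||| j = j) (by
    constructor
    · intro h t hi
      have h1 : (i ||| j).testBit t = j.testBit t := by rw [h]
      rw [Nat.testBit_or, hi, Bool.true_or] at h1
      exact h1.symm
    · intro h
      apply Nat.eq_of_testBit_eq
      intro t
      rw [Nat.testBit_or]
      cases hi : i.testBit t with
      | true => simp [h t hi]
      | false => simp)

/-- One step of zero-LLR propagation, computing the stage-`t` zero-LLR set from the
stage-`t+1` zero-LLR set `S`, for a polar code of length `2^n`. -/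
def zstep (n t : ℕ) (S : Finset ℕ) : Finset ℕ :=
  (Finset.range (2 ^ n)).filter fun i =>
    if i.testBit t then i ∈ S ∧ i - 2 ^ t ∈ S else i ∈ S ∨ i + 2 ^ t ∈ S

/-- Zero-LLR set at stage `t` for puncturing set `X`, for a polar code of length `2^n`:
`Zstage n X n = X` and `Zstage n X t = zstep n t (Zstage n X (t+1))` for `t < n`. -/
def Zstage (n : ℕ) (X : Finset ℕ) (t : ℕ) : Finset ℕ :=
  if _h : n ≤ t then X else zstep n t (Zstage n X (t + 1))
termination_by n - t
decreasing_by omega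

/-- The incapable set resulting from puncturing set `X`. -/
def Up (n : ℕ) (X : Finset ℕ) : Finset ℕ := Zstage n X 0

/-- `psi n j Q`: `Q` is a minimal puncturing bit pattern making bit `j` incapable. -/
def psi (n j : ℕ) (Q : Finset ℕ) : Prop :=
  Q ⊆ Finset.range (2 ^ n) ∧ j ∈ Up n Q ∧ ∀ Q' ⊂ Q, j ∉ Up n Q'

/-- Binary Hamming weight: the number of ones in the binary representation. -/
def hamw (j : ℕ) : ℕ := (Nat.bits j).count true

theorem xor_two_pow_of_testBit_eq_false {x t : ℕ} (h : x.testBit t = false) :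
    x ^^^ 2 ^ t = x + 2 ^ t := by
  induction t generalizing x with
  | zero =>
    have hdiv : (x ^^^ 1) / 2 = x / 2 := by simp [Nat.xor_div_two]
    have hmod : (x ^^^ 1) % 2 = (x + 1) % 2 := Nat.xor_mod_two_eq
    simp only [Nat.testBit_zero, decide_eq_false_iff_not, pow_zero] at h ⊢
    omega
  | succ t ih =>
    have hdiv : (x ^^^ 2 ^ (t + 1)) / 2 = x / 2 + 2 ^ t := by
      rw [Nat.xor_div_two, Nat.pow_succ, Nat.mul_div_cancel _ two_pos,
        ih (by rwa [← Nat.testBit_add_one])]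
    have hmod : (x ^^^ 2 ^ (t + 1)) % 2 = (x + 2 ^ (t + 1)) % 2 := Nat.xor_mod_two_eq
    have hpow : 2 ^ (t + 1) = 2 * 2 ^ t := Nat.pow_succ'
    omega

theorem xor_two_pow_of_testBit_eq_true {x t : ℕ} (h : x.testBit t = true) :
    x ^^^ 2 ^ t = x - 2 ^ t := by
  have hflip : (x ^^^ 2 ^ t).testBit t = false := by simp [h]
  have := xor_two_pow_of_testBit_eq_false hflip
  rw [Nat.xor_assoc, Nat.xor_self, Nat.xor_zero] at this
  omega

theorem testBit_xor_two_pow_of_ne {x t s : ℕ} (h : s ≠ t) :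
    (x ^^^ 2 ^ t).testBit s = x.testBit s := by
  simp [Nat.testBit_two_pow_of_ne h.symm]

theorem Zstage_of_le {n t : ℕ} (X : Finset ℕ) (h : n ≤ t) : Zstage n X t = X := by
  rw [Zstage, dif_pos h]

theorem Zstage_of_lt {n t : ℕ} (X : Finset ℕ) (h : t < n) :
    Zstage n X t = zstep n t (Zstage n X (t + 1)) := by
  rw [Zstage, dif_neg (Nat.not_le.mpr h)]

theorem mem_zstep {n t i : ℕ} {S : Finset ℕ} :
    i ∈ zstep n t S ↔ i < 2 ^ n ∧
      if i.testBit t then i ∈ S ∧ i - 2 ^ t ∈ S else i ∈ S ∨ i + 2 ^ t ∈ S := by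
  simp [zstep]

/-- The stage-`t + 1` positions on which the zero LLR of position `i` at stage `t` rests, when
`Z` is the stage-`t + 1` zero-LLR set: both inputs of a check node, one input of a variable node
(its own position if that one is already zero). -/
def sources (t : ℕ) (Z : Finset ℕ) (i : ℕ) : Finset ℕ :=
  if i.testBit t then {i, i ^^^ 2 ^ t} else if i ∈ Z then {i} else {i ^^^ 2 ^ t}

theorem testBit_of_mem_sources {t s i x : ℕ} {Z : Finset ℕ} (hx : x ∈ sources t Z i)
    (hs : s ≠ t) : x.testBit s = i.testBit s := by
  unfold sources at hx
  split_ifs at hx <;> simp only [Finset.mem_insert, Finset.mem_singleton] at hx <;>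
    rcases hx with rfl | rfl <;> simp [testBit_xor_two_pow_of_ne hs]

theorem card_sources (t : ℕ) (Z : Finset ℕ) (i : ℕ) :
    (sources t Z i).card = 2 ^ (i.testBit t).toNat := by
  unfold sources
  split_ifs with hi
  · have hne : i ≠ i ^^^ 2 ^ t := fun h => by simpa using congrArg (Nat.testBit · t) h
    simp [Finset.card_pair hne, hi]
  all_goals simp_all

theorem sources_subset_of_mem_zstep {n t i : ℕ} {Z : Finset ℕ} (hi : i ∈ zstep n t Z) :
    sources t Z i ⊆ Z := by
  rw [mem_zstep] at hi
  unfold sources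
  cases hbit : i.testBit t
  · simp only [hbit, Bool.false_eq_true, if_false] at hi ⊢
    split_ifs with hiZ
    · simpa using hiZ
    · simpa [xor_two_pow_of_testBit_eq_false hbit, hiZ] using hi.2
  · simp only [hbit, if_true] at hi ⊢
    simp [Finset.insert_subset_iff, xor_two_pow_of_testBit_eq_true hbit, hi.2]

theorem mem_zstep_of_sources_subset {n t i : ℕ} {Z S : Finset ℕ} (hi : i < 2 ^ n)
    (h : sources t Z i ⊆ S) : i ∈ zstep n t S := by
  rw [mem_zstep]
  refine ⟨hi, ?_⟩
  unfold sources at h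
  cases hbit : i.testBit t
  · simp only [hbit, Bool.false_eq_true, if_false] at h ⊢
    split_ifs at h
    · exact Or.inl (by simpa using h)
    · exact Or.inr (by simpa [xor_two_pow_of_testBit_eq_false hbit] using h)
  · simp only [hbit, if_true] at h ⊢
    simpa [Finset.insert_subset_iff, xor_two_pow_of_testBit_eq_true hbit] using h

/-- When `j ∈ Up n Q`: the stage-`t` positions on which that membership rests. -/
def witness (n : ℕ) (Q : Finset ℕ) (j : ℕ) : ℕ → Finset ℕ
  | 0 => {j}
  | t + 1 => (witness n Q j t).biUnion (sources t (Zstage n Q (t + 1)))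

section witness

variable {n j : ℕ} {Q : Finset ℕ}

theorem testBit_of_mem_witness {t s x : ℕ} (hx : x ∈ witness n Q j t) (hs : t ≤ s) :
    x.testBit s = j.testBit s := by
  induction t generalizing x with
  | zero => rw [Finset.mem_singleton.mp hx]
  | succ t ih =>
    obtain ⟨i, hi, hxi⟩ := Finset.mem_biUnion.mp hx
    rw [testBit_of_mem_sources hxi (by omega), ih hi (by omega)]

theorem lt_two_pow_of_mem_witness (hj : j < 2 ^ n) {t x : ℕ} (ht : t ≤ n)
    (hx : x ∈ witness n Q j t) : x < 2 ^ n :=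
  Nat.lt_pow_two_of_testBit x fun s hs => by
    rw [testBit_of_mem_witness hx (ht.trans hs), Nat.testBit_lt_two_pow
      (hj.trans_le (Nat.pow_le_pow_right two_pos hs))]

theorem card_witness (t : ℕ) :
    (witness n Q j t).card = 2 ^ ∑ s ∈ Finset.range t, (j.testBit s).toNat := by
  induction t with
  | zero => simp [witness]
  | succ t ih =>
    have hdisj : (witness n Q j t : Set ℕ).PairwiseDisjoint (sources t (Zstage n Q (t + 1))) := by
      intro a ha b hb hab
      refine Finset.disjoint_left.mpr fun x hxa hxb => hab (Nat.eq_of_testBit_eq fun s => ?_)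
      rcases eq_or_ne s t with rfl | hs
      · rw [testBit_of_mem_witness ha le_rfl, testBit_of_mem_witness hb le_rfl]
      · rw [← testBit_of_mem_sources hxa hs, testBit_of_mem_sources hxb hs]
    rw [witness, Finset.card_biUnion hdisj, Finset.sum_range_succ, pow_add, ← ih,
      ← smul_eq_mul, ← Finset.sum_const]
    refine Finset.sum_congr rfl fun i hi => ?_
    rw [card_sources, testBit_of_mem_witness hi le_rfl]

theorem witness_subset_Zstage (hj : j ∈ Up n Q) {t : ℕ} (ht : t ≤ n) :
    witness n Q j t ⊆ Zstage n Q t := by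
  induction t with
  | zero => simpa [witness, Up] using hj
  | succ t ih =>
    refine Finset.biUnion_subset.mpr fun i hi => sources_subset_of_mem_zstep (n := n) ?_
    rw [← Zstage_of_lt Q (by omega)]
    exact ih (by omega) hi

theorem witness_subset_Zstage_witness (hj : j < 2 ^ n) {t : ℕ} (ht : t ≤ n) :
    witness n Q j t ⊆ Zstage n (witness n Q j n) t := by
  induction ht using Nat.decreasingInduction with
  | self => rw [Zstage_of_le _ le_rfl]
  | of_succ t ht ih =>
    intro i hi
    rw [Zstage_of_lt _ ht]
    exact mem_zstep_of_sources_subset (lt_two_pow_of_mem_witness hj ht.le hi)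
      ((Finset.subset_biUnion_of_mem (sources t (Zstage n Q (t + 1))) hi).trans ih)

end witness

theorem hamw_bit (b : Bool) (m : ℕ) : hamw (Nat.bit b m) = hamw m + b.toNat := by
  rcases Nat.eq_zero_or_pos m with rfl | hm
  · cases b <;> simp [hamw, Nat.bit]
  · rw [hamw, hamw, Nat.bits_append_bit m b (by omega), List.count_cons]
    cases b <;> rfl

theorem hamw_eq_sum_testBit {j m : ℕ} (hj : j < 2 ^ m) :
    hamw j = ∑ s ∈ Finset.range m, (j.testBit s).toNat := by
  induction m generalizing j with
  | zero => simp [Nat.lt_one_iff.mp hj, hamw]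
  | succ m ih =>
    rw [Finset.sum_range_succ', ← Nat.bit_testBit_zero_shiftRight_one j, hamw_bit,
      Nat.shiftRight_one, ih (by omega)]
    simp [Nat.testBit_add_one]

theorem minimal_pattern_card_general (n : ℕ) (j : ℕ) (hj : j < 2 ^ n)
    (Q : Finset ℕ) (hQ : psi n j Q) :
    Q.card = 2 ^ hamw j := by
  obtain ⟨-, hjQ, hmin⟩ := hQ
  have hWQ : witness n Q j n ⊆ Q := by
    simpa [Zstage_of_le] using witness_subset_Zstage hjQ le_rfl
  have hjW : j ∈ Up n (witness n Q j n) :=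
    witness_subset_Zstage_witness hj n.zero_le (Finset.mem_singleton_self j)
  have hW : witness n Q j n = Q := hWQ.eq_of_not_ssubset fun h => hmin _ h hjW
  rw [← hW, card_witness, hamw_eq_sum_testBit hj]

/-- every minimal puncturing bit pattern for `j` has cardinality
`2^{d_H(j)}`. -/
theorem minimal_pattern_card (n : ℕ) (hn : 1 ≤ n) (j : ℕ) (hj : j < 2 ^ n)
    (Q : Finset ℕ) (hQ : psi n j Q) :
    Q.card = 2 ^ hamw j :=
  minimal_pattern_card_general n j hj Q hQ
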